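/- arXiv:2108.11157 — 2 statements merged into one kernel-verified Lean document; each statement's English description precedes it below -/
import Mathlib

section
/- Let P be a finite set partitioned into H and M, let V be a type of values, and let f : H → V assign to each honest player the unique value it signed. Assume |H| + 2·|M| < 2·t. Then there do not exist subsets A, A' ⊆ P and values b, b' ∈ V with b ≠ b' such that A ∩ H ⊆ f⁻¹({b}), A' ∩ H ⊆ f⁻¹({b'}), |A| ≥ t and |A'| ≥ t. (In other words, no two players of a step can each collect at least t valid messages advertising two distinct values in the same component.) -/
/-!
Honest players sign only one value, so the honest parts of two quorums for distinct values are
disjoint and together have at most `|H|` members, while each quorum has at most `|M|` malicious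
members. Two quorums of size `t` would therefore give `2t ≤ |H| + 2|M|`.
-/

namespace Finset

variable {α V : Type*}

theorem disjoint_of_forall_eq_of_ne {f : α → V} {s s' : Finset α} {b b' : V}
    (hb : b ≠ b') (hs : ∀ x ∈ s, f x = b) (hs' : ∀ x ∈ s', f x = b') : Disjoint s s' :=
  disjoint_left.2 fun x hx hx' => hb ((hs x hx).symm.trans (hs' x hx'))

variable [DecidableEq α]

theorem card_add_card_le_of_disjoint_of_subset {s s' u : Finset α}
    (hdisj : Disjoint s s') (hs : s ⊆ u) (hs' : s' ⊆ u) : #s + #s' ≤ #u := by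
  rw [← card_union_of_disjoint hdisj]
  exact card_le_card (union_subset hs hs')

theorem card_le_card_inter_add_card_of_subset_union {A H M : Finset α}
    (hA : A ⊆ H ∪ M) : #A ≤ #(A ∩ H) + #M :=
  calc #A ≤ #(A ∩ H ∪ M) := card_le_card fun x hx => by
        rcases mem_union.1 (hA hx) with hH | hM
        · exact mem_union_left _ (mem_inter.2 ⟨hx, hH⟩)
        · exact mem_union_right _ hM
    _ ≤ #(A ∩ H) + #M := card_union_le _ _

end Finset

theorem no_two_quorums_for_distinct_values_general
    {α V : Type*} [DecidableEq α]
    (P H M : Finset α) (hPart : P = H ∪ M)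
    (f : α → V) (t : ℕ)
    (hcard : H.card + 2 * M.card < 2 * t) :
    ¬ ∃ (A A' : Finset α) (b b' : V),
        A ⊆ P ∧ A' ⊆ P ∧ b ≠ b' ∧
        (∀ x ∈ A ∩ H, f x = b) ∧ (∀ x ∈ A' ∩ H, f x = b') ∧
        t ≤ A.card ∧ t ≤ A'.card := by
  rintro ⟨A, A', b, b', hA, hA', hb, hfA, hfA', htA, htA'⟩
  subst hPart
  have honest : (A ∩ H).card + (A' ∩ H).card ≤ H.card :=
    Finset.card_add_card_le_of_disjoint_of_subset
      (Finset.disjoint_of_forall_eq_of_ne hb hfA hfA')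
      Finset.inter_subset_right Finset.inter_subset_right
  have quorumA := Finset.card_le_card_inter_add_card_of_subset_union hA
  have quorumA' := Finset.card_le_card_inter_add_card_of_subset_union hA'
  omega

/-- No two players can each collect at least `t` valid messages advertising two
distinct values in the same component, assuming `|H| + 2|M| < 2t`, where each
honest player signs exactly one value (given by `f`). -/
theorem no_two_quorums_for_distinct_values
    {α V : Type*} [DecidableEq α]
    (P H M : Finset α) (hPart : P = H ∪ M) (hdisj : Disjoint H M)
    (f : α → V) (t : ℕ)
    (hcard : H.card + 2 * M.card < 2 * t) :
    ¬ ∃ (A A' : Finset α) (b b' : V),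
        A ⊆ P ∧ A' ⊆ P ∧ b ≠ b' ∧
        (∀ x ∈ A ∩ H, f x = b) ∧ (∀ x ∈ A' ∩ H, f x = b') ∧
        t ≤ A.card ∧ t ≤ A'.card :=
  no_two_quorums_for_distinct_values_general P H M hPart f t hcard
end

section
/- Let λ, Λ, Ω be nonnegative real numbers and let t : ℕ → ℝ satisfy t(1) = Ω, t(2) = t(1) + Λ + λ, t(3) = t(2) + Λ + λ, and t(s) = t(s−1) + 2λ for all s ≥ 4. Let α_i, α_j ∈ [0, λ]. Then: (a) for s ∈ {2, 3} and any 1 ≤ s' < s, α_j + t(s') + Λ ≤ α_i + t(s); (b) for any s ≥ 4 and any 1 ≤ s' < s, α_j + t(s') + λ ≤ α_i + t(s). (Consequently, a user ending step s at time α_i + t(s) has received every message sent by an honest player of an earlier step s' at time α_j + t(s'), since messages of steps 1–2 propagate within time Λ and later messages within time λ.) -/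
/-!
Consecutive waiting times never decrease, so `t` is monotone from step 1 on. Hence step `s`
ends at least `Λ + λ` after any earlier step when `s ≤ 3`, and at least `2λ` after it when
`s ≥ 4` (through `t s = t (s - 1) + 2λ`). Of that slack, the message delay uses `Λ`
(resp. `λ`), and the remaining `λ` absorbs the start-time discrepancy `αⱼ - αᵢ ≤ λ`.
-/

section StepTimes

variable {lam Lam : ℝ} {t : ℕ → ℝ}

theorem step_time_le_succ (hlam : 0 ≤ lam) (hLam : 0 ≤ Lam)
    (ht2 : t 2 = t 1 + Lam + lam) (ht3 : t 3 = t 2 + Lam + lam)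
    (hts : ∀ s : ℕ, 4 ≤ s → t s = t (s - 1) + 2 * lam) {n : ℕ} (hn : 1 ≤ n) :
    t n ≤ t (n + 1) := by
  obtain rfl | rfl | h3 : n = 1 ∨ n = 2 ∨ 3 ≤ n := by omega
  · linarith
  · linarith
  · have h := hts (n + 1) (by omega)
    rw [Nat.add_sub_cancel] at h
    linarith

theorem monotoneOn_step_time (hlam : 0 ≤ lam) (hLam : 0 ≤ Lam)
    (ht2 : t 2 = t 1 + Lam + lam) (ht3 : t 3 = t 2 + Lam + lam)
    (hts : ∀ s : ℕ, 4 ≤ s → t s = t (s - 1) + 2 * lam) :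
    MonotoneOn t (Set.Ici 1) :=
  monotoneOn_nat_Ici_of_le_succ fun _ hn => step_time_le_succ hlam hLam ht2 ht3 hts hn

theorem step_time_add_le_of_lt_of_le_three (hlam : 0 ≤ lam) (hLam : 0 ≤ Lam)
    (ht2 : t 2 = t 1 + Lam + lam) (ht3 : t 3 = t 2 + Lam + lam)
    {s s' : ℕ} (hs : s ≤ 3) (hs' : 1 ≤ s') (hlt : s' < s) :
    t s' + (Lam + lam) ≤ t s := by
  obtain ⟨rfl, rfl⟩ | ⟨rfl, rfl⟩ | ⟨rfl, rfl⟩ :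
      s' = 1 ∧ s = 2 ∨ s' = 1 ∧ s = 3 ∨ s' = 2 ∧ s = 3 := by omega
  all_goals linarith

theorem step_time_add_le_of_lt_of_four_le (hlam : 0 ≤ lam) (hLam : 0 ≤ Lam)
    (ht2 : t 2 = t 1 + Lam + lam) (ht3 : t 3 = t 2 + Lam + lam)
    (hts : ∀ s : ℕ, 4 ≤ s → t s = t (s - 1) + 2 * lam)
    {s s' : ℕ} (hs : 4 ≤ s) (hs' : 1 ≤ s') (hlt : s' < s) :
    t s' + 2 * lam ≤ t s := by
  have hmono : t s' ≤ t (s - 1) :=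
    monotoneOn_step_time hlam hLam ht2 ht3 hts hs' (by simp only [Set.mem_Ici]; omega)
      (by omega)
  linarith [hts s hs]

end StepTimes

theorem step_messages_received_in_time_general
    (lam Lam : ℝ) (hlam : 0 ≤ lam) (hLam : 0 ≤ Lam)
    (t : ℕ → ℝ)
    (ht2 : t 2 = t 1 + Lam + lam) (ht3 : t 3 = t 2 + Lam + lam)
    (hts : ∀ s : ℕ, 4 ≤ s → t s = t (s - 1) + 2 * lam)
    (αi αj : ℝ) (hαi : αi ∈ Set.Icc 0 lam) (hαj : αj ∈ Set.Icc 0 lam) :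
    (∀ s : ℕ, (s = 2 ∨ s = 3) → ∀ s' : ℕ, 1 ≤ s' → s' < s →
        αj + t s' + Lam ≤ αi + t s) ∧
    (∀ s : ℕ, 4 ≤ s → ∀ s' : ℕ, 1 ≤ s' → s' < s →
        αj + t s' + lam ≤ αi + t s) := by
  obtain ⟨hαi₀, -⟩ := hαi
  obtain ⟨-, hαj₁⟩ := hαj
  constructor
  · intro s hs s' hs' hlt
    have := step_time_add_le_of_lt_of_le_three hlam hLam ht2 ht3 (by omega) hs' hlt
    linarith
  · intro s hs s' hs' hlt
    have := step_time_add_le_of_lt_of_four_le hlam hLam ht2 ht3 hts hs hs' hlt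
    linarith

/-- A user ending step `s` at time `αᵢ + t s` has received every message sent
by an honest player of an earlier step `s'` at time `αⱼ + t s'`:
(a) for `s ∈ {2, 3}`, messages propagate within time `Λ`;
(b) for `s ≥ 4`, messages propagate within time `λ`. -/
theorem step_messages_received_in_time
    (lam Lam Om : ℝ) (hlam : 0 ≤ lam) (hLam : 0 ≤ Lam) (hOm : 0 ≤ Om)
    (t : ℕ → ℝ)
    (ht1 : t 1 = Om) (ht2 : t 2 = t 1 + Lam + lam) (ht3 : t 3 = t 2 + Lam + lam)
    (hts : ∀ s : ℕ, 4 ≤ s → t s = t (s - 1) + 2 * lam)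
    (αi αj : ℝ) (hαi : αi ∈ Set.Icc 0 lam) (hαj : αj ∈ Set.Icc 0 lam) :
    (∀ s : ℕ, (s = 2 ∨ s = 3) → ∀ s' : ℕ, 1 ≤ s' → s' < s →
        αj + t s' + Lam ≤ αi + t s) ∧
    (∀ s : ℕ, 4 ≤ s → ∀ s' : ℕ, 1 ≤ s' → s' < s →
        αj + t s' + lam ≤ αi + t s) :=
  step_messages_received_in_time_general lam Lam hlam hLam t ht2 ht3 hts αi αj hαi hαj
end
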